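/- The subgroup of GL₇(ℚ) generated by P_α, P_β and N₁ has order 168, the set E = {I, N₁,…,N₇} is a normal subgroup of it of order 8; in particular this group of order 168 is not simple (hence is not isomorphic to PSL₂(7)). -/

import Mathlib

open Matrix Equiv

/-- `PSL₂(7)`: the quotient of `SL(2, ℤ/7ℤ)` by its center. -/
abbrev PSL₂7 : Type :=
  Matrix.SpecialLinearGroup (Fin 2) (ZMod 7) ⧸
    Subgroup.center (Matrix.SpecialLinearGroup (Fin 2) (ZMod 7))

/-- The permutation matrix of `σ` (sending the basis vector `eⱼ` to `e_{σ j}`),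
as an element of `GL₇(ℚ)`.  (We index the basis `e₁, …, e₇` of the paper by `Fin 7`,
so `e_{i+1}` corresponds to index `i`.) -/
def permGL (σ : Equiv.Perm (Fin 7)) : GL (Fin 7) ℚ :=
  ⟨(σ⁻¹).permMatrix ℚ, σ.permMatrix ℚ,
    by rw [← PEquiv.toMatrix_trans, ← Equiv.toPEquiv_trans]
       simp [Equiv.Perm.inv_def, Equiv.toPEquiv_refl],
    by rw [← PEquiv.toMatrix_trans, ← Equiv.toPEquiv_trans]
       simp [Equiv.Perm.inv_def, Equiv.toPEquiv_refl]⟩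

theorem diag_mul_self (v : Fin 7 → ℚ) (h : ∀ i, v i * v i = 1) :
    Matrix.diagonal v * Matrix.diagonal v = 1 := by
  rw [Matrix.diagonal_mul_diagonal]
  have hv : (fun i => v i * v i) = fun _ => (1 : ℚ) := funext h
  rw [hv]
  exact Matrix.diagonal_one

/-- A diagonal `±1` matrix as an element of `GL₇(ℚ)`. -/
def diagGL (v : Fin 7 → ℚ) (h : ∀ i, v i * v i = 1) : GL (Fin 7) ℚ :=
  ⟨Matrix.diagonal v, Matrix.diagonal v, diag_mul_self v h, diag_mul_self v h⟩

/-- `α`, the 7-cycle `(1 2 4 3 6 5 7)` of the paper, written 0-indexed on `Fin 7`. -/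
def α : Equiv.Perm (Fin 7) := c[0, 1, 3, 2, 5, 4, 6]

/-- `β = (2 4 6)(3 7 5)` of the paper, written 0-indexed on `Fin 7`. -/
def β : Equiv.Perm (Fin 7) := c[1, 3, 5] * c[2, 6, 4]

def N₁ : GL (Fin 7) ℚ :=
  diagGL ![1, 1, 1, -1, -1, -1, -1] (by intro i; fin_cases i <;> norm_num [Matrix.cons_val_succ])

def N₂ : GL (Fin 7) ℚ :=
  diagGL ![1, -1, -1, 1, -1, -1, 1] (by intro i; fin_cases i <;> norm_num [Matrix.cons_val_succ])

def N₇ : GL (Fin 7) ℚ :=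
  diagGL ![-1, 1, -1, 1, -1, 1, -1] (by intro i; fin_cases i <;> norm_num [Matrix.cons_val_succ])

def N₃ : GL (Fin 7) ℚ := N₁ * N₂
def N₄ : GL (Fin 7) ℚ := N₁ * N₇
def N₅ : GL (Fin 7) ℚ := N₂ * N₇
def N₆ : GL (Fin 7) ℚ := N₁ * N₂ * N₇

/-- The set `E = {I, N₁, …, N₇}`. -/
def Eset : Set (GL (Fin 7) ℚ) := {1, N₁, N₂, N₃, N₄, N₅, N₆, N₇}

/-- The group `2³:7:3 = ⟨P_α, P_β, N₁⟩`. -/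
def G3 : Subgroup (GL (Fin 7) ℚ) := Subgroup.closure {permGL α, permGL β, N₁}
/-!
The permutation matrices `F = ⟨P_α, P_β⟩` form a Frobenius group of order 21, since
`β α β⁻¹ = α²`. Conjugation by `P_σ` permutes the diagonal of a sign matrix, and `α`, `β` permute
the eight sign vectors of `E`; hence `F` normalizes `E`, `G3 = F ⊔ E = F · E`, and `|G3| = 21 · 8`
(Lagrange gives divisibility by both coprime factors).

As `E` is normal of odd index, every `g ∈ G3` with `g² = 1` lies in `E`, so there are at most 8 of
them. `PSL₂(7)` has at least 9: the images of `1` and of eight pairwise non-proportional trace-zero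
matrices of `SL₂(𝔽₇)`, whose squares are `-1`.
-/

namespace Subgroup

open scoped Pointwise

variable {G : Type*} [Group G]

theorem card_sup_eq_mul_of_le_normalizer {H N : Subgroup G} [Finite H] [Finite N]
    (hH : H ≤ normalizer (N : Set G)) (hcop : (Nat.card H).Coprime (Nat.card N)) :
    Nat.card ↥(H ⊔ N) = Nat.card H * Nat.card N := by
  have hset : ((H ⊔ N : Subgroup G) : Set G) = (H : Set G) * N :=
    coe_mul_of_left_le_normalizer_right H N hH
  have : Finite ↥(H ⊔ N) := by
    rw [← SetLike.coe_sort_coe, hset]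
    exact ((H : Set G).toFinite.mul (N : Set G).toFinite).to_subtype
  refine le_antisymm ?_ (Nat.le_of_dvd Nat.card_pos ?_)
  · rw [← SetLike.coe_sort_coe, hset]
    exact Set.natCard_mul_le
  · exact hcop.mul_dvd_of_dvd_of_dvd (card_dvd_of_le le_sup_left) (card_dvd_of_le le_sup_right)

theorem mem_normalizer_zpowers_of_conj_eq_zpow [Finite G] {g x : G} {n : ℤ}
    (h : g * x * g⁻¹ = x ^ n) : g ∈ normalizer (zpowers x : Set G) := by
  refine mem_normalizer_fintype fun y hy => ?_
  obtain ⟨k, rfl⟩ := mem_zpowers_iff.mp hy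
  rw [← conj_zpow, h, ← _root_.zpow_mul]
  exact zpow_mem_zpowers x _

theorem card_sq_eq_one_le_card_of_odd_index (N : Subgroup G) [N.Normal] [Finite N]
    (hN : Odd N.index) : Nat.card {g : G // g ^ 2 = 1} ≤ Nat.card N := by
  refine Nat.card_mono (N : Set G).toFinite fun g (hg : g ^ 2 = 1) => ?_
  obtain ⟨m, hm⟩ := hN
  have := N.pow_index_mem g
  rwa [hm, pow_succ, pow_mul, hg, one_pow, one_mul] at this

end Subgroup

set_option maxRecDepth 10000 in
theorem orderOf_α : orderOf α = 7 :=
  have : Fact (Nat.Prime 7) := ⟨by norm_num⟩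
  orderOf_eq_prime (by decide) (by decide)

theorem orderOf_β : orderOf β = 3 :=
  have : Fact (Nat.Prime 3) := ⟨by norm_num⟩
  orderOf_eq_prime (by decide) (by decide)

theorem β_mul_α_mul_β_inv : β * α * β⁻¹ = α ^ (2 : ℤ) := by decide

theorem card_closure_α_β : Nat.card (Subgroup.closure {α, β}) = 21 := by
  have hβ := Subgroup.zpowers_le.mpr
    (Subgroup.mem_normalizer_zpowers_of_conj_eq_zpow β_mul_α_mul_β_inv)
  rw [Set.insert_eq, Subgroup.closure_union, ← Subgroup.zpowers_eq_closure,
    ← Subgroup.zpowers_eq_closure, sup_comm, Subgroup.card_sup_eq_mul_of_le_normalizer hβ] <;>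
    simp only [Nat.card_zpowers, orderOf_α, orderOf_β]
  norm_num

section SignedPermutationMatrices

variable {n R : Type*} [Fintype n] [DecidableEq n] [Ring R]

def permGLHom : Perm n →* GL n R := (permMatrixHom (R := R)).toHomUnits

theorem permGLHom_injective [Nontrivial R] : Function.Injective (permGLHom (n := n) (R := R)) := by
  intro σ τ h
  have hm : (σ⁻¹).permMatrix R = (τ⁻¹).permMatrix R := congrArg Units.val h
  rw [← _root_.inv_inj]
  refine Equiv.ext fun i => Eq.symm ?_
  simpa [PEquiv.toMatrix_apply, Equiv.toPEquiv_apply] using congrFun (congrFun hm i) ((σ⁻¹) i)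

theorem diagonal_intCast_units_mul_self (s : n → ℤˣ) :
    diagonal (fun i => ((s i : ℤ) : R)) * diagonal (fun i => ((s i : ℤ) : R)) = 1 := by
  rw [diagonal_mul_diagonal, ← diagonal_one]
  congr 1
  ext i
  rw [← Int.cast_mul, ← Units.val_mul, Int.units_mul_self, Units.val_one, Int.cast_one]

def signDiag : (n → ℤˣ) →* GL n R where
  toFun s := ⟨_, _, diagonal_intCast_units_mul_self s, diagonal_intCast_units_mul_self s⟩
  map_one' := by ext; simp
  map_mul' s t := by ext : 1; simp

theorem signDiag_injective [CharZero R] : Function.Injective (signDiag (n := n) (R := R)) := by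
  intro s t h
  ext i : 1
  have := congrArg (fun g : GL n R => (g : Matrix n n R) i i) h
  simpa [signDiag, Units.ext_iff] using this

theorem permGLHom_mul_signDiag_mul_inv (σ : Perm n) (s : n → ℤˣ) :
    permGLHom σ * signDiag s * (permGLHom σ)⁻¹ = (signDiag (s ∘ ⇑σ⁻¹) : GL n R) := by
  ext : 1
  simp only [permGLHom, signDiag, Units.val_mul, ← map_inv, MonoidHom.coe_toHomUnits,
    MonoidHom.coe_mk, OneHom.coe_mk, permMatrixHom_apply, inv_inv]
  rw [PEquiv.toMatrix_toPEquiv_mul, PEquiv.mul_toMatrix_toPEquiv, submatrix_submatrix]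
  exact submatrix_diagonal_equiv _ σ⁻¹

theorem permGLHom_mem_normalizer_map_signDiag {K : Subgroup (n → ℤˣ)} {σ : Perm n}
    (h : ∀ s ∈ K, s ∘ ⇑σ⁻¹ ∈ K) :
    permGLHom σ ∈ Subgroup.normalizer ((K.map signDiag : Subgroup (GL n R)) : Set (GL n R)) := by
  have : Finite (K.map signDiag : Subgroup (GL n R)) :=
    ((K : Set (n → ℤˣ)).toFinite.image signDiag).to_subtype
  refine Subgroup.mem_normalizer_fintype ?_
  rintro _ ⟨s, hs, rfl⟩
  rw [permGLHom_mul_signDiag_mul_inv]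
  exact ⟨_, h s hs, rfl⟩

end SignedPermutationMatrices

theorem permGL_eq_permGLHom (σ : Perm (Fin 7)) : permGL σ = permGLHom σ := rfl

def ε₁ : Fin 7 → ℤˣ := ![1, 1, 1, -1, -1, -1, -1]
def ε₂ : Fin 7 → ℤˣ := ![1, -1, -1, 1, -1, -1, 1]
def ε₇ : Fin 7 → ℤˣ := ![-1, 1, -1, 1, -1, 1, -1]

theorem signDiag_ε₁ : signDiag ε₁ = N₁ :=
  Units.ext <| congrArg diagonal <| funext fun i => by fin_cases i <;> rfl

theorem signDiag_ε₂ : signDiag ε₂ = N₂ :=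
  Units.ext <| congrArg diagonal <| funext fun i => by fin_cases i <;> rfl

theorem signDiag_ε₇ : signDiag ε₇ = N₇ :=
  Units.ext <| congrArg diagonal <| funext fun i => by fin_cases i <;> rfl

-- Identifying index `i` with the nonzero vector of `𝔽₂³` formed by the exponents of `ε₁ i`,
-- `ε₂ i`, `ε₇ i`, these are the characters `i ↦ (-1)^⟪c, i⟫`, `c ∈ 𝔽₂³`.
def signsE : Finset (Fin 7 → ℤˣ) :=
  {1, ε₁, ε₂, ε₁ * ε₂, ε₁ * ε₇, ε₂ * ε₇, ε₁ * ε₂ * ε₇, ε₇}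

set_option maxRecDepth 100000 in
theorem signsE_mul_mem : ∀ s ∈ signsE, ∀ t ∈ signsE, s * t ∈ signsE := by decide

set_option maxRecDepth 100000 in
theorem signsE_comp_α_inv : ∀ s ∈ signsE, s ∘ ⇑α⁻¹ ∈ signsE := by decide

set_option maxRecDepth 100000 in
theorem signsE_comp_β_inv : ∀ s ∈ signsE, s ∘ ⇑β⁻¹ ∈ signsE := by decide

theorem ε₂_comp_α_inv : ε₂ ∘ ⇑α⁻¹ = ε₁ := by decide

theorem ε₁_comp_α_inv : ε₁ ∘ ⇑α⁻¹ = ε₇ := by decide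

def signSubgroupE : Subgroup (Fin 7 → ℤˣ) where
  carrier := signsE
  mul_mem' {s t} hs ht := signsE_mul_mem s hs t ht
  one_mem' := by decide
  inv_mem' {s} hs := by
    rwa [show s⁻¹ = s from funext fun i => Int.units_inv_eq_self (s i)]

theorem coe_signSubgroupE : (signSubgroupE : Set (Fin 7 → ℤˣ)) = signsE := rfl

def E : Subgroup (GL (Fin 7) ℚ) := signSubgroupE.map signDiag

theorem coe_E : (E : Set (GL (Fin 7) ℚ)) = Eset := by
  rw [E, Subgroup.coe_map, coe_signSubgroupE]
  simp only [signsE, Finset.coe_insert, Finset.coe_singleton, Set.image_insert_eq,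
    Set.image_singleton, map_one, map_mul, signDiag_ε₁, signDiag_ε₂, signDiag_ε₇]
  rfl

theorem card_E : Nat.card E = 8 := by
  rw [E, Subgroup.card_map_of_injective signDiag_injective, ← SetLike.coe_sort_coe,
    coe_signSubgroupE, Nat.card_coe_set_eq, Set.ncard_coe_finset]
  decide

instance : Finite E := Nat.finite_of_card_ne_zero (by rw [card_E]; norm_num)

theorem N₂_eq_conj_N₁ : N₂ = (permGL α)⁻¹ * N₁ * permGL α := by
  rw [← signDiag_ε₁, ← ε₂_comp_α_inv, permGL_eq_permGLHom, ← permGLHom_mul_signDiag_mul_inv,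
    signDiag_ε₂]
  group

theorem N₇_eq_conj_N₁ : N₇ = permGL α * N₁ * (permGL α)⁻¹ := by
  rw [← signDiag_ε₁, ← signDiag_ε₇, ← ε₁_comp_α_inv, permGL_eq_permGLHom,
    permGLHom_mul_signDiag_mul_inv]

theorem E_le_G3 : E ≤ G3 := by
  have h₁ : N₁ ∈ G3 := Subgroup.subset_closure (by simp)
  have hα : permGL α ∈ G3 := Subgroup.subset_closure (by simp)
  have h₂ : N₂ ∈ G3 := N₂_eq_conj_N₁ ▸ mul_mem (mul_mem (inv_mem hα) h₁) hα
  have h₇ : N₇ ∈ G3 := N₇_eq_conj_N₁ ▸ mul_mem (mul_mem hα h₁) (inv_mem hα)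
  intro x hx
  rw [← SetLike.mem_coe, coe_E] at hx
  rcases hx with rfl | rfl | rfl | rfl | rfl | rfl | rfl | rfl
  exacts [one_mem _, h₁, h₂, mul_mem h₁ h₂, mul_mem h₁ h₇, mul_mem h₂ h₇,
    mul_mem (mul_mem h₁ h₂) h₇, h₇]

def F : Subgroup (GL (Fin 7) ℚ) := Subgroup.closure {permGL α, permGL β}

theorem card_F : Nat.card F = 21 := by
  have : F = (Subgroup.closure {α, β}).map permGLHom := by
    simp [F, MonoidHom.map_closure, Set.image_insert_eq, permGL_eq_permGLHom]
  rw [this, Subgroup.card_map_of_injective permGLHom_injective, card_closure_α_β]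

instance : Finite F := Nat.finite_of_card_ne_zero (by rw [card_F]; norm_num)

theorem F_le_normalizer_E : F ≤ Subgroup.normalizer (E : Set (GL (Fin 7) ℚ)) := by
  rw [F, Subgroup.closure_le, Set.insert_subset_iff, Set.singleton_subset_iff]
  exact ⟨permGLHom_mem_normalizer_map_signDiag (K := signSubgroupE) signsE_comp_α_inv,
    permGLHom_mem_normalizer_map_signDiag (K := signSubgroupE) signsE_comp_β_inv⟩

theorem G3_eq_F_sup_E : G3 = F ⊔ E := by
  refine le_antisymm ?_ (sup_le (Subgroup.closure_mono (by simp [Set.insert_subset_iff])) E_le_G3)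
  have hN₁ : N₁ ∈ E := by rw [← SetLike.mem_coe, coe_E]; simp [Eset]
  rw [G3, Subgroup.closure_le, Set.insert_subset_iff, Set.insert_subset_iff,
    Set.singleton_subset_iff]
  exact ⟨le_sup_left (a := F) (Subgroup.subset_closure (by simp)),
    le_sup_left (a := F) (Subgroup.subset_closure (by simp)), le_sup_right (a := F) hN₁⟩

theorem card_G3 : Nat.card G3 = 168 := by
  rw [G3_eq_F_sup_E, Subgroup.card_sup_eq_mul_of_le_normalizer F_le_normalizer_E] <;>
    rw [card_F, card_E]
  norm_num

theorem normal_E_subgroupOf_G3 : (E.subgroupOf G3).Normal := by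
  rw [G3_eq_F_sup_E]
  exact Subgroup.normal_subgroupOf_sup_of_le_normalizer F_le_normalizer_E

theorem card_E_subgroupOf_G3 : Nat.card (E.subgroupOf G3) = 8 := by
  rw [Nat.card_congr (Subgroup.subgroupOfEquivOfLe E_le_G3).toEquiv, card_E]

theorem card_sq_eq_one_G3_le : Nat.card {g : G3 // g ^ 2 = 1} ≤ 8 := by
  have hindex : (E.subgroupOf G3).index = 21 := by
    have := (E.subgroupOf G3).card_mul_index
    rw [card_E_subgroupOf_G3, card_G3] at this
    omega
  have : Finite (E.subgroupOf G3) :=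
    Nat.finite_of_card_ne_zero (by rw [card_E_subgroupOf_G3]; norm_num)
  have := normal_E_subgroupOf_G3
  exact card_E_subgroupOf_G3 ▸
    (E.subgroupOf G3).card_sq_eq_one_le_card_of_odd_index (by rw [hindex]; decide)

namespace PSL₂7

open Matrix.SpecialLinearGroup
open scoped MatrixGroups

theorem exists_smul_of_mk_eq_mk {A B : SL(2, ZMod 7)} (h : (A : PSL₂7) = B) :
    ∃ r : ZMod 7,
      (B : Matrix (Fin 2) (Fin 2) (ZMod 7)) = r • (A : Matrix (Fin 2) (Fin 2) (ZMod 7)) := by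
  obtain ⟨r, -, hr⟩ := mem_center_iff.mp (QuotientGroup.eq.mp h)
  refine ⟨r, ?_⟩
  rw [← mul_inv_cancel_left A B, coe_mul, ← hr, smul_eq_mul_diagonal]
  rfl

def sqrtsOfCenter : Fin 9 → SL(2, ZMod 7) :=
  ![1, ⟨!![0, 1; 6, 0], by decide⟩, ⟨!![0, 2; 3, 0], by decide⟩, ⟨!![0, 3; 2, 0], by decide⟩,
    ⟨!![1, 1; 5, 6], by decide⟩, ⟨!![1, 2; 6, 6], by decide⟩, ⟨!![1, 3; 4, 6], by decide⟩,
    ⟨!![1, 4; 3, 6], by decide⟩, ⟨!![1, 6; 2, 6], by decide⟩]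

theorem sqrtsOfCenter_sq_mem_center (i : Fin 9) :
    sqrtsOfCenter i ^ 2 ∈ Subgroup.center SL(2, ZMod 7) := by
  rw [mem_center_iff]
  revert i
  decide

theorem eq_of_sqrtsOfCenter_eq_smul : ∀ i j : Fin 9, ∀ r : ZMod 7,
    (sqrtsOfCenter j : Matrix (Fin 2) (Fin 2) (ZMod 7)) = r • (sqrtsOfCenter i : Matrix _ _ _) →
      i = j := by
  decide

theorem nine_le_card_sq_eq_one : 9 ≤ Nat.card {g : PSL₂7 // g ^ 2 = 1} := by
  let f : Fin 9 → {g : PSL₂7 // g ^ 2 = 1} := fun i =>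
    ⟨QuotientGroup.mk (sqrtsOfCenter i), by
      rw [← QuotientGroup.mk_pow, QuotientGroup.eq_one_iff]
      exact sqrtsOfCenter_sq_mem_center i⟩
  have hf : Function.Injective f := fun i j h =>
    let ⟨r, hr⟩ := exists_smul_of_mk_eq_mk (congrArg Subtype.val h)
    eq_of_sqrtsOfCenter_eq_smul i j r hr
  simpa using Nat.card_le_card_of_injective f hf

end PSL₂7

theorem not_nonempty_G3_mulEquiv_PSL₂7 : ¬ Nonempty (G3 ≃* PSL₂7) := by
  rintro ⟨e⟩
  have hcard := Nat.card_congr (e.toEquiv.subtypeEquiv fun g => by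
    rw [MulEquiv.toEquiv_eq_coe, MulEquiv.coe_toEquiv, ← map_pow, MulEquiv.map_eq_one_iff] :
    {g : G3 // g ^ 2 = 1} ≃ {g : PSL₂7 // g ^ 2 = 1})
  have hG3 := card_sq_eq_one_G3_le
  have hPSL := PSL₂7.nine_le_card_sq_eq_one
  omega

theorem not_isSimpleGroup_G3 : ¬ IsSimpleGroup G3 := by
  intro h
  have h8 := card_E_subgroupOf_G3
  rcases h.eq_bot_or_eq_top_of_normal _ normal_E_subgroupOf_G3 with h | h
  · rw [h, Subgroup.card_bot] at h8
    omega
  · rw [h, Subgroup.card_top, card_G3] at h8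
    omega

theorem stmt3 :
    Nat.card G3 = 168 ∧
    (∃ E : Subgroup (GL (Fin 7) ℚ),
      (E : Set (GL (Fin 7) ℚ)) = Eset ∧ Nat.card E = 8 ∧ E ≤ G3 ∧
      (E.subgroupOf G3).Normal) ∧
    ¬ IsSimpleGroup G3 ∧
    ¬ Nonempty (G3 ≃* PSL₂7) :=
  ⟨card_G3, ⟨E, coe_E, card_E, E_le_G3, normal_E_subgroupOf_G3⟩, not_isSimpleGroup_G3,
    not_nonempty_G3_mulEquiv_PSL₂7⟩
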